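/- Let M > 0, let J be a finite index set, and let (ε̌_j, σ̌_j) ∈ ℝ² for j ∈ J be given data points. Then the robust regression objective F(w, v) = Σ_{j ∈ J} φ(w·ε̌_j + v − σ̌_j) attains its minimum over ℝ², provided the strain values ε̌_j, j ∈ J, are not all equal. -/

import Mathlib

/-!
Each Huber term grows at least linearly, `huber M t ≥ M |t| - M²`, so the objective is
bounded below by `M ‖L p‖` minus a constant, where `L (w, v) = (w ε̌_j + v)_j`. When the `ε̌_j`
are not all equal, `L` is injective, hence a closed embedding of `ℝ²`; so the continuous
objective tends to infinity at infinity and attains its minimum.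
-/

open Filter

/-- The Huber penalty function with threshold `M`. -/
noncomputable def huber (M : ℝ) (t : ℝ) : ℝ :=
  if |t| ≤ M then t ^ 2 else M * (2 * |t| - M)

@[fun_prop]
lemma continuous_huber (M : ℝ) : Continuous (huber M) := by
  refine Continuous.if_le (by fun_prop) (by fun_prop) continuous_abs continuous_const ?_
  intro t ht
  rw [← sq_abs, ht]
  ring

lemma mul_abs_sub_sq_le_huber {M : ℝ} (hM : 0 ≤ M) (t : ℝ) :
    M * |t| - M ^ 2 ≤ huber M t := by
  unfold huber
  split_ifs
  · nlinarith [sq_abs t, sq_nonneg (|t| - M)]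
  · nlinarith [abs_nonneg t]

lemma pi_norm_le_sum_abs {κ : Type*} [Fintype κ] (x : κ → ℝ) : ‖x‖ ≤ ∑ k, |x k| :=
  (pi_norm_le_iff_of_nonneg (by positivity)).2 fun k =>
    Finset.single_le_sum (f := fun k => |x k|) (fun _ _ => abs_nonneg _) (Finset.mem_univ k)

section HuberRegression

variable {E κ : Type*} [NormedAddCommGroup E] [NormedSpace ℝ E]
  [Fintype κ] {M : ℝ} (L : E →ₗ[ℝ] κ → ℝ) (σ : κ → ℝ)

lemma mul_norm_sub_le_sum_huber (hM : 0 ≤ M) (p : E) :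
    M * ‖L p‖ - (M * ‖σ‖ + Fintype.card κ * M ^ 2) ≤ ∑ k, huber M (L p k - σ k) :=
  calc M * ‖L p‖ - (M * ‖σ‖ + Fintype.card κ * M ^ 2)
      ≤ M * ‖L p - σ‖ - Fintype.card κ * M ^ 2 := by
        nlinarith [norm_le_norm_add_norm_sub' (L p) σ]
    _ ≤ M * ∑ k, |L p k - σ k| - Fintype.card κ * M ^ 2 := by
        gcongr
        exact pi_norm_le_sum_abs (L p - σ)
    _ = ∑ k, (M * |L p k - σ k| - M ^ 2) := by
        simp [Finset.sum_sub_distrib, Finset.mul_sum]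
    _ ≤ ∑ k, huber M (L p k - σ k) :=
        Finset.sum_le_sum fun k _ => mul_abs_sub_sq_le_huber hM _

lemma tendsto_sum_huber_cocompact [FiniteDimensional ℝ E] (hM : 0 < M)
    (hL : LinearMap.ker L = ⊥) :
    Tendsto (fun p => ∑ k, huber M (L p k - σ k)) (cocompact E) atTop := by
  have hnorm : Tendsto (fun p => ‖L p‖) (cocompact E) atTop :=
    tendsto_norm_cocompact_atTop.comp (L.isClosedEmbedding_of_injective hL).tendsto_cocompact
  refine tendsto_atTop_mono (mul_norm_sub_le_sum_huber L σ hM.le) ?_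
  exact tendsto_atTop_add_const_right _ _ (hnorm.const_mul_atTop hM)

theorem exists_forall_sum_huber_le [FiniteDimensional ℝ E] (hM : 0 < M)
    (hL : LinearMap.ker L = ⊥) :
    ∃ p, ∀ q, ∑ k, huber M (L p k - σ k) ≤ ∑ k, huber M (L q k - σ k) := by
  have hcont : Continuous fun p => ∑ k, huber M (L p k - σ k) := by
    have := L.continuous_of_finiteDimensional
    fun_prop
  exact hcont.exists_forall_le (tendsto_sum_huber_cocompact L σ hM hL)

end HuberRegression

def designMap {ι : Type*} (J : Finset ι) (ε : ι → ℝ) : ℝ × ℝ →ₗ[ℝ] J → ℝ :=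
  LinearMap.pi fun j => ε j • LinearMap.fst ℝ ℝ ℝ + LinearMap.snd ℝ ℝ ℝ

@[simp]
lemma designMap_apply {ι : Type*} (J : Finset ι) (ε : ι → ℝ) (p : ℝ × ℝ) (j : J) :
    designMap J ε p j = p.1 * ε j + p.2 := by
  simp [designMap, mul_comm]

lemma ker_designMap_eq_bot {ι : Type*} {J : Finset ι} {ε : ι → ℝ}
    (hε : ∃ j ∈ J, ∃ j' ∈ J, ε j ≠ ε j') : LinearMap.ker (designMap J ε) = ⊥ := by
  obtain ⟨j, hj, j', hj', hne⟩ := hε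
  refine LinearMap.ker_eq_bot'.2 fun p hp => ?_
  have h : p.1 * ε j + p.2 = 0 := by simpa using congr_fun hp ⟨j, hj⟩
  have h' : p.1 * ε j' + p.2 = 0 := by simpa using congr_fun hp ⟨j', hj'⟩
  have hw : p.1 = 0 := (mul_eq_zero.1 (by linear_combination h - h' :
    (ε j - ε j') * p.1 = 0)).resolve_left (sub_ne_zero.2 hne)
  exact Prod.ext hw (by simpa [hw] using h)

/-- If the strain values `ε̌_j`, `j ∈ J`, are not all equal, then the robust regression
objective `F(w, v) = Σ_j φ(w ε̌_j + v − σ̌_j)` attains its minimum over `ℝ²`. -/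
theorem robust_regression_objective_attains_min {ι : Type*} (M : ℝ) (hM : 0 < M)
    (J : Finset ι) (ε σ : ι → ℝ)
    (hε : ∃ j ∈ J, ∃ j' ∈ J, ε j ≠ ε j') :
    ∃ p : ℝ × ℝ, ∀ q : ℝ × ℝ,
      (∑ j ∈ J, huber M (p.1 * ε j + p.2 - σ j)) ≤
        ∑ j ∈ J, huber M (q.1 * ε j + q.2 - σ j) := by
  obtain ⟨p, hp⟩ :=
    exists_forall_sum_huber_le (designMap J ε) (fun j => σ j) hM (ker_designMap_eq_bot hε)
  exact ⟨p, fun q => by simpa [← Finset.sum_coe_sort J] using hp q⟩
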